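/- Let T be a tree not isomorphic to K₂, and let S be a maximal independent set of T. Then S ⊆ Shed(T) if and only if S = Shed(T). -/

import Mathlib

open SimpleGraph

variable {V : Type*} [Fintype V] [DecidableEq V]

/-- A set of vertices is independent: no two of its vertices are adjacent. -/
def isIndep (G : SimpleGraph V) (S : Finset V) : Prop :=
  ∀ ⦃a⦄, a ∈ S → ∀ ⦃b⦄, b ∈ S → ¬ G.Adj a b

/-- The independence number `α(G)`. -/
noncomputable def indepNum (G : SimpleGraph V) : ℕ :=
  sSup {n | ∃ S : Finset V, isIndep G S ∧ S.card = n}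

/-- A maximum independent set: an independent set of size `α(G)`. -/
def isMaxIndep (G : SimpleGraph V) (S : Finset V) : Prop :=
  isIndep G S ∧ S.card = _root_.indepNum G

/-- `G` has two disjoint maximum independent sets. -/
def hasTwoDisjointMaxIndep (G : SimpleGraph V) : Prop :=
  ∃ S₁ S₂ : Finset V, isMaxIndep G S₁ ∧ isMaxIndep G S₂ ∧ Disjoint S₁ S₂

/-- A matching: a set of edges of `G`, pairwise sharing no vertex. -/
def isMatchingF (G : SimpleGraph V) (M : Finset (Sym2 V)) : Prop :=
  (∀ e ∈ M, e ∈ G.edgeSet) ∧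
  (∀ e ∈ M, ∀ f ∈ M, e ≠ f → ∀ v : V, v ∈ e → v ∉ f)

/-- The matching number `μ(G)`. -/
noncomputable def matchNum (G : SimpleGraph V) : ℕ :=
  sSup {n | ∃ M : Finset (Sym2 V), isMatchingF G M ∧ M.card = n}

/-- A shedding vertex: for every independent set `S` of `G − N[v]` there is a
neighbor `u` of `v` with `S ∪ {u}` independent. -/
def IsShedding (G : SimpleGraph V) (v : V) : Prop :=
  ∀ S : Finset V, isIndep G S → (∀ w ∈ S, w ≠ v ∧ ¬ G.Adj v w) →
    ∃ u, G.Adj v u ∧ isIndep G (insert u S)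

/-- A perfect matching of `G`: a matching covering every vertex. -/
def hasPerfectMatchingF (G : SimpleGraph V) : Prop :=
  ∃ M : Finset (Sym2 V), isMatchingF G M ∧ ∀ v : V, ∃ e ∈ M, v ∈ e

/-- The disjoint union of `k` copies of `K₂`. -/
def copiesK2 (k : ℕ) : SimpleGraph (Fin k × Fin 2) :=
  SimpleGraph.fromRel (fun p q => p.1 = q.1)

/-! Let `v` be a shedding vertex of the tree `T`. Applying the shedding property to the colour
class of `v` (in a proper 2-colouring) with `v` removed produces a leaf `u` hanging at `v`.
A leaf is never shedding unless `T ≅ K₂`, so `S ⊆ Shed(T)` forces `u ∉ S`, and maximality of `S`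
then puts the only neighbour `v` of `u` into `S`. -/

variable {W : Type*}

lemma SimpleGraph.Coloring.eq_of_adj_of_adj {G : SimpleGraph W} (C : G.Coloring (Fin 2))
    {a b c : W} (hab : G.Adj a b) (hbc : G.Adj b c) : C a = C c := by
  have := C.valid hab
  have := C.valid hbc
  omega

lemma SimpleGraph.Preconnected.nonempty_iso_top_fin_two {G : SimpleGraph W}
    (hG : G.Preconnected) {u v : W} (huv : G.Adj u v) (hu : ∀ x, G.Adj u x → x = v)
    (hv : ∀ x, G.Adj v x → x = u) :
    Nonempty (G ≃g (⊤ : SimpleGraph (Fin 2))) := by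
  have huniv : ({u, v} : Set W) = Set.univ := by
    refine Set.eq_univ_of_forall fun z => ?_
    induction (reachable_iff_reflTransGen u z).1 (hG u z) with
    | refl => exact Or.inl rfl
    | tail _ hbc ih =>
      rcases ih with rfl | rfl
      · exact Or.inr (hu _ hbc)
      · exact Or.inl (hv _ hbc)
  have hcard : Nat.card W = 2 := Nat.card_eq_two_iff.2 ⟨u, v, huv.ne, huniv⟩
  have : Finite W := Nat.finite_of_card_ne_zero (by omega)
  have htop : G = ⊤ := by
    ext a b
    have ha : a ∈ ({u, v} : Set W) := huniv ▸ Set.mem_univ a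
    have hb : b ∈ ({u, v} : Set W) := huniv ▸ Set.mem_univ b
    rcases ha with rfl | rfl <;> rcases hb with rfl | rfl <;>
      simp [huv, huv.symm, huv.ne, huv.ne.symm]
  subst htop
  exact ⟨Iso.completeGraph (Finite.equivFinOfCardEq hcard)⟩

lemma SimpleGraph.Preconnected.exists_adj_ne_of_leaf {G : SimpleGraph W} (hG : G.Preconnected)
    (hK2 : IsEmpty (G ≃g (⊤ : SimpleGraph (Fin 2)))) {u v : W} (huv : G.Adj u v)
    (hu : ∀ x, G.Adj u x → x = v) : ∃ x, G.Adj v x ∧ x ≠ u := by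
  by_contra! hv
  exact hK2.false (hG.nonempty_iso_top_fin_two huv hu hv).some

lemma isIndep_singleton (G : SimpleGraph W) (x : W) : isIndep G {x} := by
  intro a ha b hb
  rw [Finset.mem_singleton] at ha hb
  subst ha hb
  exact G.irrefl

lemma isIndep.exists_mem_adj_of_notMem [DecidableEq W] {G : SimpleGraph W} {S : Finset W}
    (hS : isIndep G S) (hmax : ∀ v ∉ S, ¬ isIndep G (insert v S)) {v : W} (hv : v ∉ S) :
    ∃ t ∈ S, G.Adj v t := by
  by_contra! h
  refine hmax v hv fun a ha b hb => ?_
  rcases Finset.mem_insert.1 ha with rfl | haS <;> rcases Finset.mem_insert.1 hb with rfl | hbS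
  · exact G.irrefl
  · exact h b hbS
  · exact fun hab => h a haS hab.symm
  · exact hS haS hbS

lemma IsShedding.exists_adj_leaf [Fintype W] [DecidableEq W] {G : SimpleGraph W}
    (C : G.Coloring (Fin 2)) {v : W} (hv : IsShedding G v) :
    ∃ u, G.Adj v u ∧ ∀ x, G.Adj u x → x = v := by
  set S := Finset.univ.filter fun x => C x = C v ∧ x ≠ v
  have hS : isIndep G S := fun a ha b hb hab => by
    simp only [S, Finset.mem_filter] at ha hb
    exact C.valid hab (ha.2.1.trans hb.2.1.symm)
  obtain ⟨u, hvu, hu⟩ := hv S hS fun w hw => by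
    simp only [S, Finset.mem_filter] at hw
    exact ⟨hw.2.2, fun hvw => C.valid hvw hw.2.1.symm⟩
  refine ⟨u, hvu, fun x hux => ?_⟩
  by_contra hxv
  have hxS : x ∈ S :=
    Finset.mem_filter.2 ⟨Finset.mem_univ x, (C.eq_of_adj_of_adj hvu hux).symm, hxv⟩
  exact hu (Finset.mem_insert_self u S) (Finset.mem_insert_of_mem hxS) hux

lemma not_isShedding_of_leaf [DecidableEq W] {G : SimpleGraph W} {u v x : W}
    (hu : ∀ y, G.Adj u y → y = v) (hvx : G.Adj v x) (hxu : x ≠ u) : ¬ IsShedding G u := by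
  intro hshed
  obtain ⟨w, huw, hind⟩ := hshed {x} (isIndep_singleton G x) fun y hy => by
    rw [Finset.mem_singleton.1 hy]
    exact ⟨hxu, fun hux => hvx.ne' (hu x hux)⟩
  obtain rfl := hu w huw
  exact hind (Finset.mem_insert_self w {x}) (Finset.mem_insert_of_mem (Finset.mem_singleton_self x))
    hvx

/-- In a tree `T ≠ K₂`, a maximal independent set `S` satisfies
`S ⊆ Shed(T)` iff `S = Shed(T)`. -/
theorem stmt16 (T : SimpleGraph V) (hT : T.IsTree)
    (hK2 : IsEmpty (T ≃g (⊤ : SimpleGraph (Fin 2))))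
    (S : Finset V) (hS : isIndep T S)
    (hmax : ∀ v ∉ S, ¬ isIndep T (insert v S)) :
    ↑S ⊆ {v : V | IsShedding T v} ↔ ↑S = {v : V | IsShedding T v} := by
  refine ⟨fun hsub => hsub.antisymm fun v hv => ?_, fun h => h.subset⟩
  obtain ⟨u, hvu, hu⟩ := IsShedding.exists_adj_leaf hT.isAcyclic.coloringTwo hv
  obtain ⟨x, hvx, hxu⟩ := hT.connected.preconnected.exists_adj_ne_of_leaf hK2 hvu.symm hu
  have huS : u ∉ S := fun huS => not_isShedding_of_leaf hu hvx hxu (hsub huS)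
  obtain ⟨t, htS, hut⟩ := hS.exists_mem_adj_of_notMem hmax huS
  obtain rfl := hu t hut
  exact htS
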